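/- Define g₁(ζ) := 30 - αγ - (βγ - 20)·cos ζ + 24·sin ζ and g₂(ζ) := 48 + (α + β·cos ζ)² - 25·cos²ζ + 48·sin ζ, with α = 5/2 - 43/(2√41), β = 9/2 - 13/(2√41), γ = 2 + 28/√41. Then for all ζ ∈ [0, π]: g₂(ζ) ≥ 23 and g₁(ζ) ≥ g₁(0) = 50 - αγ - βγ > 33. -/

import Mathlib

/-! Both bounds only use `0 ≤ sin ζ` on `[0, π]`: `g₂ ≥ 48 - 25` since the square is nonnegative and
`cos² ζ ≤ 1`, and `g₁ ζ - g₁ 0 = (βγ - 20)(1 - cos ζ) + 24 sin ζ` with `βγ - 20 > 0`. The constants reduce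
to `βγ = 187/41 + 113/√41` and `(α + β)γ = -210/41 + 140/√41`, which the bounds `32/5 < √41 < 7` settle. -/

noncomputable def α : ℝ := 5/2 - 43/(2*Real.sqrt 41)
noncomputable def β : ℝ := 9/2 - 13/(2*Real.sqrt 41)
noncomputable def γ : ℝ := 2 + 28/Real.sqrt 41

noncomputable def g1 (ζ : ℝ) : ℝ :=
  30 - α*γ - (β*γ - 20)*Real.cos ζ + 24*Real.sin ζ

noncomputable def g2 (ζ : ℝ) : ℝ :=
  48 + (α + β*Real.cos ζ)^2 - 25*Real.cos ζ^2 + 48*Real.sin ζ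

open Real

lemma sqrt_41_mem_Ioo : √41 ∈ Set.Ioo (32/5 : ℝ) 7 := by
  constructor
  · rw [Real.lt_sqrt (by norm_num)]; norm_num
  · rw [Real.sqrt_lt' (by norm_num)]; norm_num

lemma beta_mul_gamma : β * γ = 187/41 + 113/√41 := by
  have hs : √41 ≠ 0 := by positivity
  have hsq : √41 ^ 2 = 41 := Real.sq_sqrt (by norm_num)
  unfold β γ
  field_simp
  linear_combination 364 * hsq

lemma alpha_add_beta_mul_gamma : (α + β) * γ = -210/41 + 140/√41 := by
  have hs : √41 ≠ 0 := by positivity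
  have hsq : √41 ^ 2 = 41 := Real.sq_sqrt (by norm_num)
  unfold α β γ
  field_simp
  linear_combination 1568 * hsq

lemma twenty_lt_beta_mul_gamma : 20 < β * γ := by
  have h : 113/7 < 113/√41 := by
    gcongr
    exact sqrt_41_mem_Ioo.2
  rw [beta_mul_gamma]
  linarith

lemma alpha_add_beta_mul_gamma_lt : (α + β) * γ < 17 := by
  have h : 140/√41 < 140/(32/5) := by
    gcongr
    exact sqrt_41_mem_Ioo.1
  rw [alpha_add_beta_mul_gamma]
  linarith

lemma g1_zero : g1 0 = 50 - α*γ - β*γ := by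
  simp only [g1, cos_zero, sin_zero]
  ring

lemma g1_sub_g1_zero (ζ : ℝ) : g1 ζ - g1 0 = (β*γ - 20) * (1 - cos ζ) + 24 * sin ζ := by
  simp only [g1, cos_zero, sin_zero]
  ring

lemma g1_zero_le {ζ : ℝ} (hsin : 0 ≤ sin ζ) : g1 0 ≤ g1 ζ := by
  have hβγ : 0 < β*γ - 20 := sub_pos.2 twenty_lt_beta_mul_gamma
  have hcos : 0 ≤ 1 - cos ζ := sub_nonneg.2 (cos_le_one ζ)
  linarith [g1_sub_g1_zero ζ, mul_nonneg hβγ.le hcos]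

lemma twenty_three_le_g2 {ζ : ℝ} (hsin : 0 ≤ sin ζ) : 23 ≤ g2 ζ := by
  have hcos : cos ζ ^ 2 ≤ 1 := by rw [← sin_sq_add_cos_sq ζ]; nlinarith
  unfold g2
  nlinarith [sq_nonneg (α + β * cos ζ)]

theorem stmt16 :
    (∀ ζ : ℝ, 0 ≤ ζ → ζ ≤ Real.pi → 23 ≤ g2 ζ) ∧
    (∀ ζ : ℝ, 0 ≤ ζ → ζ ≤ Real.pi → g1 0 ≤ g1 ζ) ∧
    g1 0 = 50 - α*γ - β*γ ∧ (33 : ℝ) < 50 - α*γ - β*γ := by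
  refine ⟨fun ζ h0 hπ ↦ twenty_three_le_g2 (sin_nonneg_of_nonneg_of_le_pi h0 hπ),
    fun ζ h0 hπ ↦ g1_zero_le (sin_nonneg_of_nonneg_of_le_pi h0 hπ), g1_zero, ?_⟩
  linarith [alpha_add_beta_mul_gamma_lt, add_mul α β γ]
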